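/- Let N ≥ 2 and let u ∈ P_{N+1} and u_N ∈ P_N be real polynomials such that u_N(-1) = u(-1) and u_N' agrees with u' at all N roots of L_N - L_{N-1} (the left Legendre–Radau points). Then there exists a constant c with u(x) - u_N(x) = c·[ (N²/(N²-1))·(L_N(x) + L_{N-1}(x))·(x-1) - (N/(N²-1))·(L_N(x) - L_{N-1}(x))·(x+1) ] for all x. -/

import Mathlib

/-!
Write `Q = L_N - L_{N-1}`. Both `Q` and `G = D^{N-1}[(x - 1)^N (x + 1)^{N-1}]` solve
`(x² - 1) y'' + (x - 1) y' = N² y`, whose polynomial solutions of degree `≤ N` are determined by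
their `x^N` coefficient, so `Q` is a multiple of `G`. Rolle's theorem, applied `N - 1` times to the
`2N - 1` roots (with multiplicity) of `(x - 1)^N (x + 1)^{N-1}`, shows that all `N` roots of `G` are
real, and the equation forces them to be simple because `Q(-1) ≠ 0`. Hence `u' - u_N'`, of degree
`≤ N` and vanishing at these `N` points, equals `c Q`. The bracket `R` of the statement satisfies
`R' = N Q`, by the relations `(x ∓ 1) (L_N ± L_{N-1})' = N (L_N ∓ L_{N-1})`, and `R(-1) = 0`; so
`u - u_N - (c / N) R` is a constant vanishing at `-1`.
-/

open Polynomial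

noncomputable def legendre : ℕ → Polynomial ℝ
  | 0 => 1
  | 1 => Polynomial.X
  | (n + 2) =>
      Polynomial.C ((2 * (n : ℝ) + 3) / ((n : ℝ) + 2)) * Polynomial.X * legendre (n + 1)
        - Polynomial.C (((n : ℝ) + 1) / ((n : ℝ) + 2)) * legendre n

lemma mul_derivative_pow {R : Type*} [CommSemiring R] (p : R[X]) (n : ℕ) :
    p * derivative (p ^ n) = C (n : R) * derivative p * p ^ n := by
  rcases n with _ | n
  · simp
  · rw [derivative_pow, Nat.add_sub_cancel, pow_succ]; ring

section ODE

variable {R : Type*} [CommRing R]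

lemma derivative_ode_step {a b c : R} {y z : R[X]} (hz : derivative z = C c * y)
    (h : (X ^ 2 - 1) * derivative y = (C a * X + C b) * y + z) :
    (X ^ 2 - 1) * derivative (derivative y) =
      (C (a - 2) * X + C b) * derivative y + C (a + c) * y := by
  have h' := congrArg derivative h
  simp only [derivative_mul, derivative_add, derivative_sub, derivative_X_pow, derivative_one,
    derivative_X, derivative_C, hz] at h'
  simp only [map_sub, map_add, map_ofNat, Nat.cast_ofNat] at h' ⊢
  linear_combination h'

lemma iterate_derivative_ode {F : R[X]} {a b : R}
    (h : (X ^ 2 - 1) * derivative F = (C a * X + C b) * F) (j : ℕ) :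
    (X ^ 2 - 1) * derivative (derivative (derivative^[j] F)) =
      (C (a - 2 * (j + 1)) * X + C b) * derivative (derivative^[j] F)
        + C ((j + 1) * (a - j)) * derivative^[j] F := by
  induction j with
  | zero =>
    have := derivative_ode_step (c := (0 : R)) (z := 0) (by simp) (by rw [h, add_zero])
    simpa using this
  | succ j ih =>
    rw [Function.iterate_succ_apply']
    have := derivative_ode_step (derivative_C_mul _ _) ih
    push_cast
    simp only [map_sub, map_add, map_mul, map_natCast, map_ofNat, map_one] at this ⊢
    linear_combination this

end ODE

lemma card_roots_le_iterate_derivative (p : ℝ[X]) (k : ℕ) :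
    Multiset.card p.roots ≤ Multiset.card (derivative^[k] p).roots + k := by
  induction k with
  | zero => simp
  | succ k ih =>
    have := card_roots_le_derivative (derivative^[k] p)
    rw [Function.iterate_succ_apply']
    omega

lemma exists_eq_C_mul_of_eval_eq_zero {K : Type*} [Field K] {p q : K[X]} (hq : q ≠ 0)
    (s : Finset K) (hs : s.card = q.natDegree) (hqs : ∀ x ∈ s, q.eval x = 0)
    (hps : ∀ x ∈ s, p.eval x = 0) (hdeg : p.natDegree ≤ q.natDegree) :
    ∃ c, p = C c * q := by
  refine ⟨p.coeff q.natDegree / q.leadingCoeff, sub_eq_zero.mp ?_⟩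
  refine eq_zero_of_degree_lt_of_eval_finset_eq_zero s ?_ fun x hx => ?_
  · rw [hs, degree_lt_iff_coeff_zero]
    intro m hm
    rcases hm.lt_or_eq with hm | rfl
    · simp [coeff_eq_zero_of_natDegree_lt (hdeg.trans_lt hm), coeff_eq_zero_of_natDegree_lt hm]
    · rw [coeff_sub, coeff_C_mul, ← leadingCoeff,
        div_mul_cancel₀ _ (leadingCoeff_ne_zero.mpr hq), sub_self]
  · rw [eval_sub, eval_mul, hps x hx, hqs x hx, mul_zero, sub_zero]

lemma eq_of_derivative_eq_of_eval_eq {R : Type*} [CommRing R] [IsAddTorsionFree R] {p q : R[X]}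
    (hd : derivative p = derivative q) {a : R} (he : p.eval a = q.eval a) : p = q := by
  have h := eq_C_of_derivative_eq_zero (p := p - q) (by rw [derivative_sub, hd, sub_self])
  rw [← sub_eq_zero, h, ← eval_C (x := a) (a := (p - q).coeff 0), ← h, eval_sub, he, sub_self,
    map_zero]

lemma legendre_add_two (n : ℕ) :
    C ((n : ℝ) + 2) * legendre (n + 2) =
      C (2 * (n : ℝ) + 3) * X * legendre (n + 1) - C ((n : ℝ) + 1) * legendre n := by
  have hn : (n : ℝ) + 2 ≠ 0 := by positivity
  rw [legendre, mul_sub, ← mul_assoc, ← mul_assoc, ← mul_assoc, ← C_mul, ← C_mul,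
    mul_div_cancel₀ _ hn, mul_div_cancel₀ _ hn]

lemma degree_legendre (n : ℕ) : (legendre n).degree = n := by
  induction n using Nat.twoStepInduction with
  | zero => simp [legendre]
  | one => simp [legendre]
  | more n ih₀ ih₁ =>
    have ha : (2 * (n : ℝ) + 3) / ((n : ℝ) + 2) ≠ 0 := by positivity
    have hb : ((n : ℝ) + 1) / ((n : ℝ) + 2) ≠ 0 := by positivity
    have hlead : (C ((2 * (n : ℝ) + 3) / ((n : ℝ) + 2)) * X * legendre (n + 1)).degree =
        ↑(n + 2) := by
      rw [mul_comm _ (legendre _), degree_mul, degree_C_mul_X ha, ih₁]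
      norm_cast
    rw [legendre, degree_sub_eq_left_of_degree_lt] <;> rw [hlead]
    rw [degree_C_mul hb, ih₀]
    exact_mod_cast (by omega : n < n + 2)

lemma natDegree_legendre (n : ℕ) : (legendre n).natDegree = n :=
  natDegree_eq_of_degree_eq_some (degree_legendre n)

lemma eval_neg_one_legendre (n : ℕ) : (legendre n).eval (-1) = (-1) ^ n := by
  induction n using Nat.twoStepInduction with
  | zero => simp [legendre]
  | one => simp [legendre]
  | more n ih₀ ih₁ =>
    have hn : (n : ℝ) + 2 ≠ 0 := by positivity
    simp only [legendre, eval_sub, eval_mul, eval_C, eval_X, ih₀, ih₁]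
    field_simp
    ring

lemma derivative_legendre_relations (n : ℕ) :
    X * derivative (legendre (n + 1)) - derivative (legendre n) =
        C ((n : ℝ) + 1) * legendre (n + 1) ∧
      derivative (legendre (n + 1)) - X * derivative (legendre n) =
        C ((n : ℝ) + 1) * legendre n := by
  induction n with
  | zero => constructor <;> simp [legendre]
  | succ n ih =>
    obtain ⟨hA, hB⟩ := ih
    have hrec := legendre_add_two n
    have hrec' := congrArg derivative hrec
    simp only [derivative_mul, derivative_C, derivative_X, zero_mul, mul_one, zero_add,
      derivative_sub] at hrec'
    have hn : (C ((n : ℝ) + 2) : ℝ[X]) ≠ 0 := C_ne_zero.mpr (by positivity)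
    constructor <;> apply mul_left_cancel₀ hn <;> push_cast <;>
      simp only [map_add, map_mul, map_ofNat, map_one] at hA hB hrec hrec' ⊢
    · linear_combination X * hrec' + (2 * C (n : ℝ) + 3) * X * hA - (C (n : ℝ) + 2) * hB
        - (C (n : ℝ) + 2) * hrec
    · linear_combination hrec' + (C (n : ℝ) + 1) * hA

noncomputable def radauOp : ℝ[X] →ₗ[ℝ] ℝ[X] :=
  LinearMap.mulLeft ℝ (X ^ 2 - 1) ∘ₗ derivative ∘ₗ derivative +
    LinearMap.mulLeft ℝ (X - 1) ∘ₗ derivative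

lemma radauOp_apply (y : ℝ[X]) :
    radauOp y = (X ^ 2 - 1) * derivative (derivative y) + (X - 1) * derivative y := rfl

lemma coeff_radauOp (y : ℝ[X]) (k : ℕ) :
    (radauOp y).coeff k = (k : ℝ) ^ 2 * y.coeff k
      - ((k : ℝ) + 2) * ((k : ℝ) + 1) * y.coeff (k + 2)
      - ((k : ℝ) + 1) * y.coeff (k + 1) := by
  have h : radauOp y = derivative (derivative y) * X ^ 2 - derivative (derivative y)
      + derivative y * X ^ 1 - derivative y := by rw [radauOp_apply]; ring
  rw [h]
  simp only [coeff_sub, coeff_add, coeff_mul_X_pow', coeff_derivative]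
  rcases k with _ | _ | k
  · norm_num; ring
  · norm_num; ring
  · simp only [show 2 ≤ k + 2 by omega, show 1 ≤ k + 2 by omega, if_true,
      show k + 2 - 1 = k + 1 by omega]
    push_cast; ring

lemma eq_zero_of_radauOp_eq {n : ℕ} {y : ℝ[X]} (hdeg : y.natDegree ≤ n)
    (hcoeff : y.coeff n = 0) (hy : radauOp y = ((n : ℝ) ^ 2) • y) : y = 0 := by
  by_contra hy0
  set d := y.natDegree
  have hd : d < n := lt_of_le_of_ne hdeg fun h =>
    leadingCoeff_ne_zero.mpr hy0 (by rwa [leadingCoeff, show y.natDegree = n from h])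
  have hcoeff_d := congrArg (coeff · d) hy
  simp only [coeff_radauOp, coeff_smul, smul_eq_mul,
    coeff_eq_zero_of_natDegree_lt (show d < d + 1 by omega),
    coeff_eq_zero_of_natDegree_lt (show d < d + 2 by omega), mul_zero, sub_zero] at hcoeff_d
  have hdn : ((d : ℝ) ^ 2 - (n : ℝ) ^ 2) * y.leadingCoeff = 0 := by
    rw [leadingCoeff]; linear_combination hcoeff_d
  have hsq : (d : ℝ) ^ 2 - (n : ℝ) ^ 2 ≠ 0 := by
    have : (d : ℝ) < n := by exact_mod_cast hd
    nlinarith [(d.cast_nonneg : (0 : ℝ) ≤ d)]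
  exact hy0 (leadingCoeff_eq_zero.mp ((mul_eq_zero.mp hdn).resolve_left hsq))

lemma rootMultiplicity_derivative_derivative {K : Type*} [Field K] [CharZero K] {y : K[X]}
    {t : K} (hk : 2 ≤ y.rootMultiplicity t) :
    derivative (derivative y) ≠ 0 ∧
      (derivative (derivative y)).rootMultiplicity t = y.rootMultiplicity t - 2 := by
  have hroot : y.IsRoot t := (rootMultiplicity_pos'.mp (by omega)).2
  have hmult := derivative_rootMultiplicity_of_root hroot
  have hroot' : (derivative y).IsRoot t := (rootMultiplicity_pos'.mp (by omega)).2
  refine ⟨?_, by rw [derivative_rootMultiplicity_of_root hroot', hmult]; omega⟩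
  rw [Ne, derivative_eq_zero]
  intro hdeg
  rw [eq_C_of_natDegree_eq_zero hdeg, rootMultiplicity_C] at hmult
  omega

lemma rootMultiplicity_le_one_of_radauOp_eq {y : ℝ[X]} {μ : ℝ} (hy : radauOp y = μ • y)
    (hy₁ : y.eval (-1) ≠ 0) (t : ℝ) : y.rootMultiplicity t ≤ 1 := by
  classical
  by_contra! hk
  set k := y.rootMultiplicity t
  obtain ⟨hy''0, hmult₂⟩ := rootMultiplicity_derivative_derivative hk
  have hy'0 : derivative y ≠ 0 := fun h => hy''0 (by rw [h, map_zero])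
  have hmult₁ : (derivative y).rootMultiplicity t = k - 1 :=
    derivative_rootMultiplicity_of_root (rootMultiplicity_pos'.mp (by omega)).2
  have ht : t ≠ -1 := by
    rintro rfl
    exact hy₁ (rootMultiplicity_pos'.mp (by omega)).2
  have hsq : (X ^ 2 - 1 : ℝ[X]) = (X - C 1) * (X - C (-1)) := by
    simp only [map_one, map_neg]; ring
  have hX0 : (X - C (1 : ℝ)) * (X - C (-1)) ≠ 0 :=
    mul_ne_zero (X_sub_C_ne_zero 1) (X_sub_C_ne_zero _)
  set e := (X - C (1 : ℝ)).rootMultiplicity t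
  have he : e ≤ 1 := by simp only [e, rootMultiplicity_X_sub_C]; split_ifs <;> omega
  have hlhs : ((X ^ 2 - 1) * derivative (derivative y)).rootMultiplicity t = e + (k - 2) := by
    have he' : (X - C (-1 : ℝ)).rootMultiplicity t = 0 := by
      rw [rootMultiplicity_X_sub_C, if_neg ht]
    rw [hsq, rootMultiplicity_mul (mul_ne_zero hX0 hy''0), rootMultiplicity_mul hX0, he', hmult₂]
    rfl
  -- `t` has multiplicity `e + (k - 2)` on the left but at least `e + (k - 1)` on the right
  have hdvd : (X - C t) ^ (e + (k - 1)) ∣ (X ^ 2 - 1) * derivative (derivative y) := by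
    have hrhs : (X ^ 2 - 1) * derivative (derivative y) = C μ * y - (X - C 1) * derivative y := by
      rw [← smul_eq_C_mul, ← hy, radauOp_apply, map_one]; ring
    rw [hrhs]
    refine dvd_sub ?_ ?_
    · exact (pow_dvd_pow _ (by omega)).trans
        (dvd_mul_of_dvd_right (pow_rootMultiplicity_dvd y t) _)
    · rw [← hmult₁, ← rootMultiplicity_mul (mul_ne_zero (X_sub_C_ne_zero 1) hy'0)]
      exact pow_rootMultiplicity_dvd _ t
  have := (le_rootMultiplicity_iff (mul_ne_zero (by rw [hsq]; exact hX0) hy''0)).mpr hdvd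
  omega

-- indexed so that `radau n = L_N - L_{N-1}` with `N = n + 1`, avoiding truncated subtraction
noncomputable def radau (n : ℕ) : ℝ[X] := legendre (n + 1) - legendre n

lemma natDegree_radau (n : ℕ) : (radau n).natDegree = n + 1 := by
  rw [radau, natDegree_sub_eq_left_of_natDegree_lt] <;> simp [natDegree_legendre]

lemma radau_ne_zero (n : ℕ) : radau n ≠ 0 :=
  ne_zero_of_natDegree_gt (n := 0) (by rw [natDegree_radau]; omega)

lemma eval_neg_one_radau (n : ℕ) : (radau n).eval (-1) = 2 * (-1) ^ (n + 1) := by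
  rw [radau, eval_sub, eval_neg_one_legendre, eval_neg_one_legendre]
  ring

lemma X_sub_one_mul_derivative_legendre_add (n : ℕ) :
    (X - 1) * derivative (legendre (n + 1) + legendre n) = C ((n : ℝ) + 1) * radau n := by
  obtain ⟨hA, hB⟩ := derivative_legendre_relations n
  rw [radau, derivative_add]
  linear_combination hA - hB

lemma X_add_one_mul_derivative_radau (n : ℕ) :
    (X + 1) * derivative (radau n) = C ((n : ℝ) + 1) * (legendre (n + 1) + legendre n) := by
  obtain ⟨hA, hB⟩ := derivative_legendre_relations n
  rw [radau, derivative_sub]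
  linear_combination hA + hB

lemma radauOp_radau (n : ℕ) : radauOp (radau n) = (((n : ℝ) + 1) ^ 2) • radau n := by
  have hplus := X_add_one_mul_derivative_radau n
  have hplus' := congrArg derivative hplus
  simp only [derivative_mul, derivative_add, derivative_X, derivative_one, derivative_C,
    add_zero, one_mul, zero_mul, zero_add] at hplus'
  have hminus := X_sub_one_mul_derivative_legendre_add n
  rw [derivative_add] at hminus
  rw [radauOp_apply, smul_eq_C_mul, map_pow]
  linear_combination (X - 1) * hplus' + C ((n : ℝ) + 1) * hminus

noncomputable def radauRodrigues (n : ℕ) : ℝ[X] :=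
  derivative^[n] ((X - 1) ^ (n + 1) * (X + 1) ^ n)

lemma radauOp_radauRodrigues (n : ℕ) :
    radauOp (radauRodrigues n) = (((n : ℝ) + 1) ^ 2) • radauRodrigues n := by
  have hF : (X ^ 2 - 1) * derivative ((X - 1) ^ (n + 1) * (X + 1) ^ n) =
      (C (2 * (n : ℝ) + 1) * X + C 1) * ((X - 1) ^ (n + 1) * (X + 1) ^ n) := by
    have h₁ := mul_derivative_pow (X - 1 : ℝ[X]) (n + 1)
    have h₂ := mul_derivative_pow (X + 1 : ℝ[X]) n
    simp only [derivative_sub, derivative_add, derivative_X, derivative_one, sub_zero,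
      add_zero, mul_one] at h₁ h₂
    rw [derivative_mul]
    push_cast at h₁ ⊢
    simp only [map_add, map_mul, map_ofNat, map_one] at h₁ ⊢
    linear_combination (X + 1) * (X + 1) ^ n * h₁ + (X - 1) * (X - 1) ^ (n + 1) * h₂
  have := iterate_derivative_ode hF n
  rw [radauOp_apply, radauRodrigues, smul_eq_C_mul]
  simp only [map_sub, map_mul, map_add, map_pow, map_ofNat, map_one] at this ⊢
  linear_combination this

lemma natDegree_radauRodrigues_le (n : ℕ) : (radauRodrigues n).natDegree ≤ n + 1 := by
  refine (natDegree_iterate_derivative _ _).trans ?_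
  have : ((X - 1) ^ (n + 1) * (X + 1) ^ n : ℝ[X]).natDegree ≤ 2 * n + 1 := by
    compute_degree
    omega
  omega

lemma card_roots_radauRodrigues (n : ℕ) :
    n + 1 ≤ Multiset.card (radauRodrigues n).roots := by
  have hF : Multiset.card ((X - 1) ^ (n + 1) * (X + 1) ^ n : ℝ[X]).roots = 2 * n + 1 := by
    have h₁ : (X - 1 : ℝ[X]) = X - C 1 := by rw [map_one]
    have h₂ : (X + 1 : ℝ[X]) = X - C (-1) := by rw [map_neg, map_one, sub_neg_eq_add]
    rw [h₁, h₂, roots_mul (mul_ne_zero (pow_ne_zero _ (X_sub_C_ne_zero _))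
      (pow_ne_zero _ (X_sub_C_ne_zero _))), roots_pow, roots_pow, roots_X_sub_C, roots_X_sub_C]
    simp only [Multiset.card_add, Multiset.card_nsmul, Multiset.card_singleton]
    ring
  have := card_roots_le_iterate_derivative ((X - 1) ^ (n + 1) * (X + 1) ^ n : ℝ[X]) n
  rw [radauRodrigues]
  omega

lemma radau_roots (n : ℕ) :
    (radau n).roots.Nodup ∧ Multiset.card (radau n).roots = n + 1 := by
  classical
  have hneg : (radau n).eval (-1) ≠ 0 := by rw [eval_neg_one_radau]; simp
  refine ⟨Multiset.nodup_iff_count_le_one.mpr fun t => ?_, ?_⟩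
  · rw [count_roots]
    exact rootMultiplicity_le_one_of_radauOp_eq (radauOp_radau n) hneg t
  set a := (radau n).coeff (n + 1)
  set b := (radauRodrigues n).coeff (n + 1)
  have ha : a ≠ 0 := by
    simpa only [a, leadingCoeff, natDegree_radau] using leadingCoeff_ne_zero.mpr (radau_ne_zero n)
  have hG : radauRodrigues n ≠ 0 := by
    intro h
    have := card_roots_radauRodrigues n
    simp [h] at this
  have hprop : b • radau n = a • radauRodrigues n := by
    rw [← sub_eq_zero]
    refine eq_zero_of_radauOp_eq (n := n + 1) ?_ ?_ ?_
    · refine (natDegree_sub_le _ _).trans (max_le ?_ ?_)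
      · exact (natDegree_smul_le _ _).trans (natDegree_radau n).le
      · exact (natDegree_smul_le _ _).trans (natDegree_radauRodrigues_le n)
    · simp only [coeff_sub, coeff_smul, smul_eq_mul, a, b]; ring
    · rw [map_sub, map_smul, map_smul, radauOp_radau, radauOp_radauRodrigues, smul_sub,
        smul_comm b, smul_comm a]
      push_cast; rfl
  have hb : b ≠ 0 := by
    rintro hb
    rw [hb, zero_smul, eq_comm, smul_eq_zero] at hprop
    exact hprop.elim ha hG
  refine le_antisymm ((card_roots' _).trans (natDegree_radau n).le) ?_
  rw [← roots_smul_nonzero _ hb, hprop, roots_smul_nonzero _ ha]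
  exact card_roots_radauRodrigues n

noncomputable def radauCorrection (n : ℕ) : ℝ[X] :=
  C (((n : ℝ) + 1) ^ 2 / (((n : ℝ) + 1) ^ 2 - 1)) * (legendre (n + 1) + legendre n) * (X - 1)
    - C (((n : ℝ) + 1) / (((n : ℝ) + 1) ^ 2 - 1)) * radau n * (X + 1)

lemma derivative_radauCorrection {n : ℕ} (hn : n ≠ 0) :
    derivative (radauCorrection n) = C ((n : ℝ) + 1) * radau n := by
  have hN : ((n : ℝ) + 1) ^ 2 - 1 ≠ 0 := by
    have : (1 : ℝ) ≤ n := by exact_mod_cast Nat.one_le_iff_ne_zero.mpr hn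
    nlinarith
  have hminus := X_sub_one_mul_derivative_legendre_add n
  have hplus := X_add_one_mul_derivative_radau n
  rw [derivative_add] at hminus
  have hα : C (((n : ℝ) + 1) ^ 2 / (((n : ℝ) + 1) ^ 2 - 1)) * C ((n : ℝ) + 1)
      - C (((n : ℝ) + 1) / (((n : ℝ) + 1) ^ 2 - 1)) = C ((n : ℝ) + 1) := by
    rw [← C_mul, ← C_sub]; congr 1; field_simp
  have hβ : C (((n : ℝ) + 1) ^ 2 / (((n : ℝ) + 1) ^ 2 - 1))
      - C (((n : ℝ) + 1) / (((n : ℝ) + 1) ^ 2 - 1)) * C ((n : ℝ) + 1) = 0 := by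
    rw [← C_mul, ← C_sub, C_eq_zero]; field_simp; ring
  rw [radauCorrection]
  simp only [derivative_sub, derivative_add, derivative_mul, derivative_C, derivative_X,
    derivative_one, zero_mul, zero_add, sub_zero, add_zero, mul_one]
  linear_combination C (((n : ℝ) + 1) ^ 2 / (((n : ℝ) + 1) ^ 2 - 1)) * hminus
    - C (((n : ℝ) + 1) / (((n : ℝ) + 1) ^ 2 - 1)) * hplus + radau n * hα
    + (legendre (n + 1) + legendre n) * hβ

lemma eval_neg_one_radauCorrection (n : ℕ) : (radauCorrection n).eval (-1) = 0 := by
  simp only [radauCorrection, eval_sub, eval_mul, eval_add, eval_C, eval_X, eval_one,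
    eval_neg_one_legendre, pow_succ]
  ring

theorem stmt_18 (N : ℕ) (hN : 2 ≤ N) (u uN : Polynomial ℝ)
    (hu : u.natDegree ≤ N + 1) (huN : uN.natDegree ≤ N)
    (hinit : uN.eval (-1) = u.eval (-1))
    (hcol : ∀ x : ℝ, (legendre N - legendre (N - 1)).eval x = 0 →
      (derivative uN).eval x = (derivative u).eval x) :
    ∃ c : ℝ, ∀ x : ℝ,
      u.eval x - uN.eval x =
        c * (((N : ℝ) ^ 2 / ((N : ℝ) ^ 2 - 1)) *
              ((legendre N).eval x + (legendre (N - 1)).eval x) * (x - 1)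
            - ((N : ℝ) / ((N : ℝ) ^ 2 - 1)) *
              ((legendre N).eval x - (legendre (N - 1)).eval x) * (x + 1)) := by
  obtain ⟨n, rfl⟩ : ∃ n, N = n + 1 := ⟨N - 1, by omega⟩
  rw [Nat.add_sub_cancel] at hcol ⊢
  obtain ⟨hnodup, hcard⟩ := radau_roots n
  have hradau := radau_ne_zero n
  obtain ⟨c, hc⟩ : ∃ c, derivative u - derivative uN = C c * radau n := by
    refine exists_eq_C_mul_of_eval_eq_zero hradau (radau n).roots.toFinset
      (by rw [Multiset.toFinset_card_of_nodup hnodup, hcard, natDegree_radau])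
      (fun x hx => (mem_roots hradau).mp (Multiset.mem_toFinset.mp hx))
      (fun x hx => ?_) ?_
    · rw [eval_sub, hcol x ((mem_roots hradau).mp (Multiset.mem_toFinset.mp hx)), sub_self]
    · rw [natDegree_radau]
      refine (natDegree_sub_le _ _).trans (max_le ?_ ?_) <;>
        exact (natDegree_derivative_le _).trans (by omega)
  have hcorr : u - uN = C (c / ((n : ℝ) + 1)) * radauCorrection n := by
    refine eq_of_derivative_eq_of_eval_eq (a := -1) ?_ ?_
    · rw [derivative_sub, hc, derivative_C_mul, derivative_radauCorrection (by omega),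
        ← mul_assoc, ← C_mul, div_mul_cancel₀ _ (by positivity)]
    · rw [eval_sub, hinit, sub_self, eval_mul, eval_neg_one_radauCorrection, mul_zero]
  refine ⟨c / ((n : ℝ) + 1), fun x => ?_⟩
  rw [← eval_sub, hcorr]
  simp only [radauCorrection, radau, eval_mul, eval_sub, eval_add, eval_C, eval_X, eval_one]
  push_cast
  ring
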